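/- arXiv:1204.2136 — 6 statements merged into one kernel-verified Lean document; each statement's English description precedes it below -/
import Mathlib

section
/- Utility for directional variance queries (Theorem 4.3, conditional form): Let A be an n×d real matrix, w ≥ 0, B = (AᵀA + w²·I_d)^{1/2}, let r be a positive integer and 0 < η < 1/2. Then for every unit vector x ∈ ℝ^d, γ_{r×d}{ M : (1−η)·xᵀAᵀAx − ηw² ≤ (1/r)·‖M·(Bx)‖² − w² ≤ (1+η)·xᵀAᵀAx + ηw² } ≥ 1 − 2·exp(−η²r/8). -/
open MeasureTheory ProbabilityTheory Matrix

noncomputable section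

instance matMeas (m n : Type*) : MeasurableSpace (Matrix m n ℝ) :=
  inferInstanceAs (MeasurableSpace (m → n → ℝ))

/-- The standard Gaussian measure on `ι → ℝ`: iid standard normal coordinates. -/
def stdGaussianPi (ι : Type*) [Fintype ι] : Measure (ι → ℝ) :=
  Measure.pi fun _ => gaussianReal 0 1

instance (ι : Type*) [Fintype ι] : IsProbabilityMeasure (stdGaussianPi ι) := by
  unfold stdGaussianPi; infer_instance

/-- The measure on `m × ι` real matrices with iid standard normal entries. -/
def stdGaussianMatrix (m ι : Type*) [Fintype m] [Fintype ι] : Measure (Matrix m ι ℝ) :=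
  (Measure.pi fun _ : m => stdGaussianPi ι : Measure (m → ι → ℝ))

/-- Two `n×d` matrices are neighbors if they differ on a single row,
whose change has `ℓ₂`-norm at most 1. -/
def MatNeighbors {n d : ℕ} (A A' : Matrix (Fin n) (Fin d) ℝ) : Prop :=
  ∃ (i : Fin n) (v : Fin d → ℝ), Real.sqrt (∑ j, v j ^ 2) ≤ 1 ∧
    A' = A + Matrix.of fun k j => if k = i then v j else 0

/-- Mean-centering of the rows of `A`:  `A - (1/n)·J·A` with `J` the all-ones matrix. -/
def centerMat {n d : ℕ} (A : Matrix (Fin n) (Fin d) ℝ) : Matrix (Fin n) (Fin d) ℝ :=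
  A - ((n : ℝ)⁻¹) • ((Matrix.of fun _ _ : Fin n => (1 : ℝ)) * A)

/-! For a unit vector `u`, the coordinates of `M u` are independent standard Gaussians, so
`‖M u‖²` is a χ² variable with `r` degrees of freedom and moment generating function
`(1 - 2t)^(-r/2)`. Chernoff's bound at `t = ± η / (2 (1 ± η))` bounds each tail by
`((1 ± η) e^(∓η))^(r/2) ≤ e^(-η² r / 8)`. Scaling extends this to every vector `y`, and for
`y = B x` we have `‖y‖² = xᵀAᵀAx + w²`, which turns the two-sided bound on `‖M y‖² / r` into the
claimed one. -/

open Real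

lemma exp_neg_half_mul_sqrt_one_add_le {η : ℝ} (hη : 0 ≤ η) (hη1 : η ≤ 1) :
    exp (-η / 2) * √(1 + η) ≤ exp (-η ^ 2 / 8) := by
  have hlog : 1 + η ≤ exp (η - η ^ 2 / 4) := by
    have hx : 0 ≤ η - η ^ 2 / 4 := by nlinarith
    nlinarith [quadratic_le_exp_of_nonneg hx]
  calc exp (-η / 2) * √(1 + η) = √(exp (-η) * (1 + η)) := by
        rw [sqrt_mul (exp_nonneg _), ← exp_half]
    _ ≤ √(exp (-η) * exp (η - η ^ 2 / 4)) := by gcongr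
    _ = exp (-η ^ 2 / 8) := by rw [← exp_add, ← exp_half]; ring_nf

lemma exp_half_mul_sqrt_one_sub_le {η : ℝ} (hη : 0 ≤ η) (hη1 : η ≤ 1) :
    exp (η / 2) * √(1 - η) ≤ exp (-η ^ 2 / 8) := by
  have hlog : 1 - η ≤ exp (-(η + η ^ 2 / 4)) := by
    set q := η / 2 + η ^ 2 / 8 with hq_def
    have hq : 1 - q ≤ exp (-q) := by linarith [add_one_le_exp (-q)]
    have hq2 : (1 - q) ^ 2 ≤ exp (-q) ^ 2 := pow_le_pow_left₀ (by nlinarith) hq 2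
    rw [← exp_nat_mul] at hq2
    calc 1 - η ≤ (1 - q) ^ 2 := by rw [hq_def]; nlinarith
      _ ≤ _ := hq2.trans_eq (by rw [hq_def]; push_cast; ring_nf)
  calc exp (η / 2) * √(1 - η) = √(exp η * (1 - η)) := by
        rw [sqrt_mul (exp_nonneg _), ← exp_half]
    _ ≤ √(exp η * exp (-(η + η ^ 2 / 4))) := by gcongr
    _ = exp (-η ^ 2 / 8) := by rw [← exp_add, ← exp_half]; ring_nf

section Chernoff

variable {Ω : Type*} [MeasurableSpace Ω] {μ : Measure Ω} [IsProbabilityMeasure μ] {X : Ω → ℝ}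
  {r : ℕ} {η : ℝ}

lemma measureReal_ge_le_of_mgf_eq (hX : ∀ t < 1 / 2, mgf X μ t = (√(1 - 2 * t))⁻¹ ^ r)
    (hη : 0 ≤ η) :
    μ.real {ω | (1 + η) * r ≤ X ω} ≤ (exp (-η / 2) * √(1 + η)) ^ r := by
  set t := η / (2 * (1 + η)) with ht_def
  have ht : t < 1 / 2 := by rw [div_lt_iff₀ (by positivity)]; linarith
  have hmgf := hX t ht
  calc μ.real {ω | (1 + η) * r ≤ X ω} ≤ exp (-t * ((1 + η) * r)) * mgf X μ t :=
        measure_ge_le_exp_mul_mgf _ (by positivity)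
          (Integrable.of_integral_ne_zero (hmgf.trans_ne
            (pow_pos (inv_pos.2 (sqrt_pos.2 (by linarith))) r).ne'))
    _ = (exp (-η / 2) * √(1 + η)) ^ r := by
        have hsqrt : (√(1 - 2 * t))⁻¹ = √(1 + η) := by
          rw [← sqrt_inv, ht_def]; congr 1; field_simp; ring
        rw [hmgf, hsqrt, mul_pow, ← exp_nat_mul]
        congr 2
        rw [ht_def]
        field_simp

lemma measureReal_le_le_of_mgf_eq (hX : ∀ t < 1 / 2, mgf X μ t = (√(1 - 2 * t))⁻¹ ^ r)
    (hη : 0 ≤ η) (hη1 : η < 1) :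
    μ.real {ω | X ω ≤ (1 - η) * r} ≤ (exp (η / 2) * √(1 - η)) ^ r := by
  have h1η : 0 < 1 - η := by linarith
  set t := -(η / (2 * (1 - η))) with ht_def
  have ht : t < 1 / 2 := by linarith [show 0 ≤ η / (2 * (1 - η)) by positivity]
  have hmgf := hX t ht
  calc μ.real {ω | X ω ≤ (1 - η) * r} ≤ exp (-t * ((1 - η) * r)) * mgf X μ t :=
        measure_le_le_exp_mul_mgf _ (by rw [ht_def, neg_nonpos]; positivity)
          (Integrable.of_integral_ne_zero (hmgf.trans_ne
            (pow_pos (inv_pos.2 (sqrt_pos.2 (by linarith))) r).ne'))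
    _ = (exp (η / 2) * √(1 - η)) ^ r := by
        have hsqrt : (√(1 - 2 * t))⁻¹ = √(1 - η) := by
          rw [← sqrt_inv, ht_def]; congr 1; field_simp; ring
        rw [hmgf, hsqrt, mul_pow, ← exp_nat_mul]
        congr 2
        rw [ht_def]
        field_simp

lemma measure_near_mean_ge_of_mgf_eq (hX : ∀ t < 1 / 2, mgf X μ t = (√(1 - 2 * t))⁻¹ ^ r)
    (hη : 0 ≤ η) (hη1 : η < 1) :
    ENNReal.ofReal (1 - 2 * exp (-η ^ 2 * r / 8))
      ≤ μ {ω | (1 - η) * r ≤ X ω ∧ X ω ≤ (1 + η) * r} := by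
  have hpow : exp (-η ^ 2 * r / 8) = exp (-η ^ 2 / 8) ^ r := by rw [← exp_nat_mul]; ring_nf
  have hlow : μ.real {ω | X ω ≤ (1 - η) * r} ≤ exp (-η ^ 2 * r / 8) :=
    (measureReal_le_le_of_mgf_eq hX hη hη1).trans
      (hpow ▸ pow_le_pow_left₀ (by positivity) (exp_half_mul_sqrt_one_sub_le hη hη1.le) r)
  have hup : μ.real {ω | (1 + η) * r ≤ X ω} ≤ exp (-η ^ 2 * r / 8) :=
    (measureReal_ge_le_of_mgf_eq hX hη).trans
      (hpow ▸ pow_le_pow_left₀ (by positivity) (exp_neg_half_mul_sqrt_one_add_le hη hη1.le) r)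
  have hcover : Set.univ ⊆ {ω | (1 - η) * r ≤ X ω ∧ X ω ≤ (1 + η) * r}
      ∪ {ω | X ω ≤ (1 - η) * r} ∪ {ω | (1 + η) * r ≤ X ω} := by
    intro ω _
    by_cases hlo : X ω ≤ (1 - η) * r
    · exact Or.inl (Or.inr hlo)
    by_cases hhi : (1 + η) * r ≤ X ω
    · exact Or.inr hhi
    exact Or.inl (Or.inl ⟨by linarith, by linarith⟩)
  have hsum := (measureReal_mono hcover (measure_ne_top μ _)).trans
    ((measureReal_union_le _ _).trans (add_le_add_left (measureReal_union_le _ _) _))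
  rw [probReal_univ] at hsum
  rw [← ofReal_measureReal]
  exact ENNReal.ofReal_le_ofReal (by linarith)

end Chernoff

lemma stdGaussianPi_map_dotProduct {ι : Type*} [Fintype ι] (u : ι → ℝ) :
    (stdGaussianPi ι).map (· ⬝ᵥ u) = gaussianReal 0 (∑ i, u i ^ 2).toNNReal := by
  have hdot : (· ⬝ᵥ u) = innerSL ℝ (WithLp.toLp 2 u) ∘ WithLp.toLp 2 := by
    ext v; simp [PiLp.inner_apply, dotProduct, mul_comm]
  rw [stdGaussianPi, hdot, ← Measure.map_map (by fun_prop) (by fun_prop), map_pi_eq_stdGaussian,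
    IsGaussian.map_eq_gaussianReal, integral_strongDual_stdGaussian, variance_dual_stdGaussian,
    innerSL_apply_norm, EuclideanSpace.real_norm_sq_eq]

lemma integral_exp_mul_sq_gaussianReal {t : ℝ} (ht : t < 1 / 2) :
    ∫ x, exp (t * x ^ 2) ∂gaussianReal 0 1 = (√(1 - 2 * t))⁻¹ := by
  have hpdf : ∀ x, gaussianPDFReal 0 1 x • exp (t * x ^ 2)
      = (√(2 * π))⁻¹ * exp (-(1 / 2 - t) * x ^ 2) := by
    intro x
    simp only [gaussianPDFReal, NNReal.coe_one, mul_one, sub_zero, smul_eq_mul, mul_assoc,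
      ← exp_add]
    ring_nf
  rw [integral_gaussianReal_eq_integral_smul one_ne_zero]
  simp_rw [hpdf]
  have h : 0 < 1 - 2 * t := by linarith
  rw [integral_const_mul, integral_gaussian, ← sqrt_inv, ← sqrt_inv, ← sqrt_mul' _ (by positivity)]
  congr 1
  field_simp

lemma mgf_sum_sq_stdGaussianPi {ι : Type*} [Fintype ι] {t : ℝ} (ht : t < 1 / 2) :
    mgf (fun z => ∑ i, z i ^ 2) (stdGaussianPi ι) t = (√(1 - 2 * t))⁻¹ ^ Fintype.card ι := by
  simp_rw [mgf, Finset.mul_sum, exp_sum]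
  rw [stdGaussianPi, integral_fintype_prod_eq_pow (fun y => exp (t * y ^ 2)),
    integral_exp_mul_sq_gaussianReal ht]

lemma stdGaussianMatrix_map_mulVec {m ι : Type*} [Fintype m] [Fintype ι] {u : ι → ℝ}
    (hu : ∑ i, u i ^ 2 = 1) :
    (stdGaussianMatrix m ι).map (· *ᵥ u) = stdGaussianPi m := by
  have hrows := Measure.pi_map_pi (μ := fun _ : m => stdGaussianPi ι)
    (f := fun _ => (· ⬝ᵥ u)) (fun _ => by fun_prop)
  simp_rw [stdGaussianPi_map_dotProduct, hu, Real.toNNReal_one] at hrows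
  exact hrows

instance isProbabilityMeasure_stdGaussianMatrix {m ι : Type*} [Fintype m] [Fintype ι] :
    IsProbabilityMeasure (stdGaussianMatrix m ι) :=
  inferInstanceAs (IsProbabilityMeasure (Measure.pi fun _ : m => stdGaussianPi ι))

lemma measure_sum_sq_mulVec_near_ge_of_sum_sq_eq_one {m ι : Type*} [Fintype m] [Fintype ι]
    {u : ι → ℝ} (hu : ∑ i, u i ^ 2 = 1) {η : ℝ} (hη : 0 ≤ η) (hη1 : η < 1) :
    ENNReal.ofReal (1 - 2 * exp (-η ^ 2 * Fintype.card m / 8))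
      ≤ stdGaussianMatrix m ι {M | (1 - η) * Fintype.card m ≤ ∑ i, (M *ᵥ u) i ^ 2 ∧
          ∑ i, (M *ᵥ u) i ^ 2 ≤ (1 + η) * Fintype.card m} := by
  have hmeas : Measurable fun M : Matrix m ι ℝ => M *ᵥ u := by
    unfold mulVec dotProduct; fun_prop
  have hS : MeasurableSet {z : m → ℝ | (1 - η) * Fintype.card m ≤ ∑ i, z i ^ 2 ∧
      ∑ i, z i ^ 2 ≤ (1 + η) * Fintype.card m} := by
    measurability
  have h := measure_near_mean_ge_of_mgf_eq (μ := stdGaussianPi m)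
    (fun _ ht => mgf_sum_sq_stdGaussianPi ht) hη hη1
  rwa [← stdGaussianMatrix_map_mulVec hu, Measure.map_apply hmeas hS] at h

lemma sum_sq_mulVec_smul {m ι : Type*} [Fintype m] [Fintype ι] (M : Matrix m ι ℝ) (c : ℝ)
    (u : ι → ℝ) : ∑ i, (M *ᵥ (c • u)) i ^ 2 = c ^ 2 * ∑ i, (M *ᵥ u) i ^ 2 := by
  simp only [mulVec_smul, Pi.smul_apply, smul_eq_mul, mul_pow, Finset.mul_sum]

lemma measure_sum_sq_mulVec_near_ge {m ι : Type*} [Fintype m] [Nonempty m] [Fintype ι]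
    (y : ι → ℝ) {η : ℝ} (hη : 0 ≤ η) (hη1 : η < 1) :
    ENNReal.ofReal (1 - 2 * exp (-η ^ 2 * Fintype.card m / 8))
      ≤ stdGaussianMatrix m ι {M |
          (1 - η) * ∑ j, y j ^ 2 ≤ (Fintype.card m : ℝ)⁻¹ * ∑ i, (M *ᵥ y) i ^ 2 ∧
          (Fintype.card m : ℝ)⁻¹ * ∑ i, (M *ᵥ y) i ^ 2 ≤ (1 + η) * ∑ j, y j ^ 2} := by
  have hr : (0 : ℝ) < Fintype.card m := by exact_mod_cast Fintype.card_pos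
  rcases (Finset.sum_nonneg fun j _ => sq_nonneg (y j) : 0 ≤ ∑ j, y j ^ 2).eq_or_lt with hσ | hσ
  · have hy : y = 0 := funext fun j => pow_eq_zero_iff two_ne_zero |>.1 <|
      (Finset.sum_eq_zero_iff_of_nonneg fun j _ => sq_nonneg (y j)).1 hσ.symm j (Finset.mem_univ j)
    simp [hy, (exp_pos _).le]
  generalize hσ_def : ∑ j, y j ^ 2 = σ at hσ ⊢
  obtain ⟨u, hu, rfl⟩ : ∃ u : ι → ℝ, ∑ j, u j ^ 2 = 1 ∧ y = √σ • u := by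
    refine ⟨(√σ)⁻¹ • y, ?_, ?_⟩
    · simp only [Pi.smul_apply, smul_eq_mul, mul_pow, ← Finset.mul_sum, inv_pow, hσ_def,
        sq_sqrt hσ.le, inv_mul_cancel₀ hσ.ne']
    · rw [smul_smul, mul_inv_cancel₀ (sqrt_pos.2 hσ).ne', one_smul]
  refine (measure_sum_sq_mulVec_near_ge_of_sum_sq_eq_one (m := m) hu hη hη1).trans_eq
    (congrArg _ (Set.ext fun M => ?_))
  rw [Set.mem_ofPred_eq, Set.mem_ofPred_eq, sum_sq_mulVec_smul, sq_sqrt hσ.le,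
    le_inv_mul_iff₀ hr, inv_mul_le_iff₀ hr]
  constructor <;> rintro ⟨hlo, hhi⟩ <;> constructor <;> nlinarith

lemma sum_sq_mulVec {m ι : Type*} [Fintype m] [Fintype ι] (C : Matrix m ι ℝ) (x : ι → ℝ) :
    ∑ i, (C *ᵥ x) i ^ 2 = x ⬝ᵥ ((Cᵀ * C) *ᵥ x) := by
  rw [← mulVec_mulVec, dotProduct_mulVec, vecMul_transpose]
  simp only [dotProduct, sq]

theorem jl_directional_variance_utility_general {n d : ℕ} {A : Matrix (Fin n) (Fin d) ℝ}
    {w : ℝ} {B : Matrix (Fin d) (Fin d) ℝ} (hB : B.PosSemidef)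
    (hB2 : B * B = Aᵀ * A + (w ^ 2) • (1 : Matrix (Fin d) (Fin d) ℝ))
    {r : ℕ} (hr : 0 < r) {η : ℝ} (hη : 0 < η) (hη2 : η < 1 / 2)
    (x : Fin d → ℝ) (hx : ∑ j, x j ^ 2 = 1) :
    stdGaussianMatrix (Fin r) (Fin d)
      {M : Matrix (Fin r) (Fin d) ℝ |
        (1 - η) * (x ⬝ᵥ ((Aᵀ * A) *ᵥ x)) - η * w ^ 2
            ≤ (r : ℝ)⁻¹ * (∑ i, (M *ᵥ (B *ᵥ x)) i ^ 2) - w ^ 2 ∧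
        (r : ℝ)⁻¹ * (∑ i, (M *ᵥ (B *ᵥ x)) i ^ 2) - w ^ 2
            ≤ (1 + η) * (x ⬝ᵥ ((Aᵀ * A) *ᵥ x)) + η * w ^ 2}
    ≥ ENNReal.ofReal (1 - 2 * Real.exp (-η ^ 2 * r / 8)) := by
  have hBx : ∑ j, (B *ᵥ x) j ^ 2 = x ⬝ᵥ ((Aᵀ * A) *ᵥ x) + w ^ 2 := by
    have hBt : Bᵀ = B := by simpa using hB.isHermitian.eq
    have hxx : x ⬝ᵥ x = 1 := by simpa [dotProduct, sq] using hx
    rw [sum_sq_mulVec, hBt, hB2, add_mulVec, dotProduct_add, smul_mulVec, one_mulVec,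
      dotProduct_smul, hxx, smul_eq_mul, mul_one]
  have : Nonempty (Fin r) := Fin.pos_iff_nonempty.1 hr
  have h := measure_sum_sq_mulVec_near_ge (m := Fin r) (B *ᵥ x) hη.le (by linarith)
  rw [Fintype.card_fin, hBx] at h
  refine h.trans_eq (congrArg _ (Set.ext fun M => ?_))
  rw [Set.mem_ofPred_eq, Set.mem_ofPred_eq]
  constructor <;> rintro ⟨hlo, hhi⟩ <;> constructor <;> linarith

/-- Theorem 4.3 (conditional form): utility for directional variance queries.
`B` is the positive semidefinite square root of `AᵀA + w²I`. -/
theorem jl_directional_variance_utility {n d : ℕ} {A : Matrix (Fin n) (Fin d) ℝ}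
    {w : ℝ} (hw : 0 ≤ w) {B : Matrix (Fin d) (Fin d) ℝ} (hB : B.PosSemidef)
    (hB2 : B * B = Aᵀ * A + (w ^ 2) • (1 : Matrix (Fin d) (Fin d) ℝ))
    {r : ℕ} (hr : 0 < r) {η : ℝ} (hη : 0 < η) (hη2 : η < 1 / 2)
    (x : Fin d → ℝ) (hx : ∑ j, x j ^ 2 = 1) :
    stdGaussianMatrix (Fin r) (Fin d)
      {M : Matrix (Fin r) (Fin d) ℝ |
        (1 - η) * (x ⬝ᵥ ((Aᵀ * A) *ᵥ x)) - η * w ^ 2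
            ≤ (r : ℝ)⁻¹ * (∑ i, (M *ᵥ (B *ᵥ x)) i ^ 2) - w ^ 2 ∧
        (r : ℝ)⁻¹ * (∑ i, (M *ᵥ (B *ᵥ x)) i ^ 2) - w ^ 2
            ≤ (1 + η) * (x ⬝ᵥ ((Aᵀ * A) *ᵥ x)) + η * w ^ 2}
    ≥ ENNReal.ofReal (1 - 2 * Real.exp (-η ^ 2 * r / 8)) :=
  jl_directional_variance_utility_general hB hB2 hr hη hη2 x hx
end
end

section
/- Antitonicity of the Moore–Penrose pseudoinverse on quadratic forms (Fact 3.6 / Claim A.3): Let A and B be real symmetric positive semidefinite n×n matrices with the same kernel (A·x = 0 ↔ B·x = 0), and let P and Q be the Moore–Penrose pseudoinverses of A and B respectively. If xᵀAx ≤ xᵀBx for every x ∈ ℝ^n, then xᵀQx ≤ xᵀPx for every x ∈ ℝ^n. -/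
/-!
The pseudoinverse of a symmetric matrix is symmetric (by uniqueness), and `ker A ⊆ ker B` gives
`B A P = B`, whence `Q A P = Q Q B A P = Q`.
Hence, with `u = Q x` and `w = P x`, the form of `A` gives `uᵀAw = xᵀQx` and `wᵀAw = xᵀPx`,
while `uᵀAu ≤ uᵀBu = xᵀQx`. Expanding `0 ≤ (u - w)ᵀA(u - w)` yields `xᵀQx ≤ xᵀPx`.
-/

open Matrix

namespace Matrix

variable {R : Type*} {k l m n : Type*} [Fintype l] [Fintype m] [Fintype n]

theorem mulVec_dotProduct_mulVec_mulVec [CommSemiring R] [Fintype k] (M : Matrix k m R)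
    (A : Matrix k l R) (N : Matrix l n R) (x : m → R) (y : n → R) :
    (M *ᵥ x) ⬝ᵥ A *ᵥ (N *ᵥ y) = x ⬝ᵥ (Mᵀ * A * N) *ᵥ y := by
  rw [← mulVec_mulVec, ← mulVec_mulVec, dotProduct_transpose_mulVec, dotProduct_comm]

theorem PosSemidef.two_mul_dotProduct_mulVec_le [CommRing R] [LinearOrder R]
    [IsStrictOrderedRing R] [StarRing R] [TrivialStar R] {A : Matrix n n R} (hA : A.PosSemidef)
    (u w : n → R) :
    2 * (u ⬝ᵥ A *ᵥ w) ≤ u ⬝ᵥ A *ᵥ u + w ⬝ᵥ A *ᵥ w := by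
  have hsymm : w ⬝ᵥ A *ᵥ u = u ⬝ᵥ A *ᵥ w := by
    rw [← dotProduct_transpose_mulVec, (isHermitian_iff_isSymm.mp hA.1).eq]
  have hnonneg := hA.dotProduct_mulVec_nonneg (u - w)
  simp only [star_trivial, mulVec_sub, dotProduct_sub, sub_dotProduct] at hnonneg
  linarith

structure IsMoorePenroseInverse [Semiring R] (A : Matrix m n R) (P : Matrix n m R) : Prop where
  mul_inv_mul : A * P * A = A
  inv_mul_inv : P * A * P = P
  isSymm_mul_inv : (A * P).IsSymm
  isSymm_inv_mul : (P * A).IsSymm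

namespace IsMoorePenroseInverse

section CommSemiring

variable [CommSemiring R] {A : Matrix m n R} {P P' : Matrix n m R}

theorem transpose (hP : IsMoorePenroseInverse A P) : IsMoorePenroseInverse Aᵀ Pᵀ where
  mul_inv_mul := by simp only [← transpose_mul, ← Matrix.mul_assoc, hP.mul_inv_mul]
  inv_mul_inv := by simp only [← transpose_mul, ← Matrix.mul_assoc, hP.inv_mul_inv]
  isSymm_mul_inv := by rw [← transpose_mul]; exact hP.isSymm_inv_mul.transpose
  isSymm_inv_mul := by rw [← transpose_mul]; exact hP.isSymm_mul_inv.transpose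

theorem mul_inv_eq (hP : IsMoorePenroseInverse A P) (hP' : IsMoorePenroseInverse A P') :
    A * P = A * P' :=
  calc A * P = (A * P' * A * P)ᵀ := by rw [hP'.mul_inv_mul, hP.isSymm_mul_inv.eq]
    _ = A * P * (A * P') := by
      rw [Matrix.mul_assoc, transpose_mul, hP.isSymm_mul_inv.eq, hP'.isSymm_mul_inv.eq]
    _ = A * P' := by rw [← Matrix.mul_assoc, hP.mul_inv_mul]

theorem unique (hP : IsMoorePenroseInverse A P) (hP' : IsMoorePenroseInverse A P') : P = P' := by
  have hPA : P * A = P' * A := by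
    simpa only [← transpose_mul, transpose_inj] using hP.transpose.mul_inv_eq hP'.transpose
  calc P = P * A * P := hP.inv_mul_inv.symm
    _ = P' * A * P' := by rw [Matrix.mul_assoc, hP.mul_inv_eq hP', ← Matrix.mul_assoc, hPA]
    _ = P' := hP'.inv_mul_inv

end CommSemiring

section Square

variable [CommSemiring R] {A P : Matrix n n R}

theorem isSymm (hP : IsMoorePenroseInverse A P) (hA : A.IsSymm) : P.IsSymm := by
  have hPt := hP.transpose
  rw [hA.eq] at hPt
  exact hPt.unique hP

theorem mul_inv_comm (hP : IsMoorePenroseInverse A P) (hA : A.IsSymm) : A * P = P * A := by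
  rw [← hP.isSymm_mul_inv.eq, transpose_mul, (hP.isSymm hA).eq, hA.eq]

end Square

theorem mul_inv_mul_of_ker_le [Ring R] {A : Matrix m n R} {P : Matrix n m R} {B : Matrix k n R}
    (hP : IsMoorePenroseInverse A P) (hker : ∀ x, A *ᵥ x = 0 → B *ᵥ x = 0) :
    B * (P * A) = B := by
  refine ext_iff_mulVec.mpr fun x ↦ ?_
  have hA : A *ᵥ (x - (P * A) *ᵥ x) = 0 := by
    rw [mulVec_sub, mulVec_mulVec, ← Matrix.mul_assoc, hP.mul_inv_mul, sub_self]
  have hB := hker _ hA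
  rw [mulVec_sub, mulVec_mulVec, sub_eq_zero] at hB
  exact hB.symm

theorem inv_mul_mul_of_ker_le [CommRing R] {A B P Q : Matrix n n R}
    (hQ : IsMoorePenroseInverse B Q) (hB : B.IsSymm) (hP : IsMoorePenroseInverse A P)
    (hA : A.IsSymm) (hker : ∀ x, A *ᵥ x = 0 → B *ᵥ x = 0) : Q * A * P = Q := by
  have hQQB : Q * Q * B = Q := by
    rw [Matrix.mul_assoc, ← hQ.mul_inv_comm hB, ← Matrix.mul_assoc, hQ.inv_mul_inv]
  calc Q * A * P = Q * Q * B * (A * P) := by rw [hQQB, Matrix.mul_assoc]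
    _ = Q * Q * (B * (P * A)) := by rw [hP.mul_inv_comm hA, Matrix.mul_assoc]
    _ = Q := by rw [hP.mul_inv_mul_of_ker_le hker, hQQB]

end IsMoorePenroseInverse

end Matrix

/-- Fact 3.6 / Claim A.3: antitonicity of the Moore–Penrose pseudoinverse on quadratic forms.
`P` and `Q` are the Moore–Penrose pseudoinverses of `A` and `B` (given by the four Penrose
equations); if `A` and `B` are PSD with the same kernel and `xᵀAx ≤ xᵀBx` for all `x`,
then `xᵀQx ≤ xᵀPx` for all `x`. -/
theorem pseudoinverse_quadform_antitone {n : ℕ} {A B P Q : Matrix (Fin n) (Fin n) ℝ}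
    (hA : A.PosSemidef) (hB : B.PosSemidef)
    (hker : ∀ x : Fin n → ℝ, A *ᵥ x = 0 ↔ B *ᵥ x = 0)
    (hP : A * P * A = A ∧ P * A * P = P ∧ (A * P)ᵀ = A * P ∧ (P * A)ᵀ = P * A)
    (hQ : B * Q * B = B ∧ Q * B * Q = Q ∧ (B * Q)ᵀ = B * Q ∧ (Q * B)ᵀ = Q * B)
    (hle : ∀ x : Fin n → ℝ, x ⬝ᵥ (A *ᵥ x) ≤ x ⬝ᵥ (B *ᵥ x)) :
    ∀ x : Fin n → ℝ, x ⬝ᵥ (Q *ᵥ x) ≤ x ⬝ᵥ (P *ᵥ x) := by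
  intro x
  have hAs := isHermitian_iff_isSymm.mp hA.1
  have hBs := isHermitian_iff_isSymm.mp hB.1
  have hP' : IsMoorePenroseInverse A P := ⟨hP.1, hP.2.1, hP.2.2.1, hP.2.2.2⟩
  have hQ' : IsMoorePenroseInverse B Q := ⟨hQ.1, hQ.2.1, hQ.2.2.1, hQ.2.2.2⟩
  have hcross : (Q *ᵥ x) ⬝ᵥ A *ᵥ (P *ᵥ x) = x ⬝ᵥ Q *ᵥ x := by
    rw [mulVec_dotProduct_mulVec_mulVec, (hQ'.isSymm hBs).eq,
      hQ'.inv_mul_mul_of_ker_le hBs hP' hAs fun y ↦ (hker y).mp]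
  have hformP : (P *ᵥ x) ⬝ᵥ A *ᵥ (P *ᵥ x) = x ⬝ᵥ P *ᵥ x := by
    rw [mulVec_dotProduct_mulVec_mulVec, (hP'.isSymm hAs).eq, hP'.inv_mul_inv]
  have hformQ : (Q *ᵥ x) ⬝ᵥ B *ᵥ (Q *ᵥ x) = x ⬝ᵥ Q *ᵥ x := by
    rw [mulVec_dotProduct_mulVec_mulVec, (hQ'.isSymm hBs).eq, hQ'.inv_mul_inv]
  have hexpand := hA.two_mul_dotProduct_mulVec_le (Q *ᵥ x) (P *ᵥ x)
  linarith [hle (Q *ᵥ x)]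
end

section
/- Determinant ratio bound under a rank-one row perturbation (inequality (5)): Let w > 0 and let A, A′ be n×d real matrices with A′ = A + e_i vᵀ for some index i and unit vector v ∈ ℝ^d. Assume ‖Ax‖₂ ≥ w‖x‖₂ and ‖A′x‖₂ ≥ w‖x‖₂ for every x ∈ ℝ^d (all singular values of A and A′ are at least w). Then e^{−2/w} ≤ det(A′ᵀA′)/det(AᵀA) ≤ e^{2/w}. -/
/-!
Write `M = AᵀA`, `a = A i`, and `α = vᵀM⁻¹v`, `β = vᵀM⁻¹a`, `γ = aᵀM⁻¹a`. Since
`A'ᵀA' = M + a vᵀ + v aᵀ + v vᵀ` is a rank-two update of `M`, the matrix determinant lemma gives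
`det (A'ᵀA') / det M = (1 + β)² + α (1 - γ)`. Now `α ≤ w⁻²` because `M ≥ w²`, `γ ≤ 1` because `γ`
is the leverage score of row `i`, and `β² ≤ αγ` by Cauchy–Schwarz for `M⁻¹`; hence the ratio is at
most `(1 + w⁻¹)² ≤ exp (2 / w)`. The lower bound is the same estimate with `A` and `A'` swapped,
as `A = A' + eᵢ (-v)ᵀ`.
-/

open Matrix

namespace Matrix

theorem dotProduct_transpose_mul_self_mulVec {m n R : Type*} [Fintype m] [Fintype n]
    [CommSemiring R] (A : Matrix m n R) (x : n → R) :
    x ⬝ᵥ ((Aᵀ * A) *ᵥ x) = (A *ᵥ x) ⬝ᵥ (A *ᵥ x) := by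
  rw [← mulVec_mulVec, dotProduct_mulVec, vecMul_transpose]

theorem transpose_mul_self_add_vecMulVec_single {m n R : Type*} [Fintype m] [DecidableEq m]
    [CommSemiring R] (A : Matrix m n R) (i : m) (v : n → R) :
    (A + vecMulVec (Pi.single i 1) v)ᵀ * (A + vecMulVec (Pi.single i 1) v) =
      Aᵀ * A + vecMulVec (A i) v + vecMulVec v (A i) + vecMulVec v v := by
  rw [transpose_add, transpose_vecMulVec, Matrix.add_mul, Matrix.mul_add, Matrix.mul_add,
    mul_vecMulVec, vecMulVec_mul, vecMulVec_mul_vecMulVec, mulVec_single_one, single_one_vecMul,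
    single_dotProduct, Pi.single_eq_same, one_mul, one_smul, col_transpose, ← add_assoc]
  rfl

theorem det_add_vecMulVec_add_vecMulVec_add_vecMulVec {n R : Type*} [Fintype n] [DecidableEq n]
    [CommRing R] {M : Matrix n n R} (hM : M.IsSymm) (hdet : IsUnit M.det) (a v : n → R) :
    (M + vecMulVec a v + vecMulVec v a + vecMulVec v v).det =
      M.det * ((1 + v ⬝ᵥ (M⁻¹ *ᵥ a)) ^ 2 + v ⬝ᵥ (M⁻¹ *ᵥ v) * (1 - a ⬝ᵥ (M⁻¹ *ᵥ a))) := by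
  set U := of ![a, v]
  set V := of ![v, a + v]
  have hUV : vecMulVec a v + vecMulVec v a + vecMulVec v v = Uᵀ * V := by
    ext j k
    simp only [U, V, add_apply, vecMulVec_apply, mul_apply, transpose_apply, of_apply,
      Fin.sum_univ_two, cons_val_zero, cons_val_one, Pi.add_apply]
    ring
  have hentry : ∀ s t, (V * M⁻¹ * Uᵀ) s t = ![v, a + v] s ⬝ᵥ (M⁻¹ *ᵥ ![a, v] t) := fun _ _ => by
    rw [Matrix.mul_assoc]; rfl
  have hsymm : a ⬝ᵥ (M⁻¹ *ᵥ v) = v ⬝ᵥ (M⁻¹ *ᵥ a) := by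
    rw [dotProduct_mulVec, ← mulVec_transpose, hM.inv.eq, dotProduct_comm]
  rw [add_assoc, add_assoc, ← add_assoc (vecMulVec a v), hUV, det_add_mul _ _ hdet, det_fin_two]
  simp only [add_apply, one_apply_eq, one_apply_ne zero_ne_one, one_apply_ne one_ne_zero, hentry,
    cons_val_zero, cons_val_one, add_dotProduct, hsymm]
  ring

section Real

variable {m n : Type*} [Fintype m] [Fintype n]

theorem PosSemidef.sq_dotProduct_mulVec_le {P : Matrix n n ℝ} (hP : P.PosSemidef) (x y : n → ℝ) :
    (x ⬝ᵥ (P *ᵥ y)) ^ 2 ≤ (x ⬝ᵥ (P *ᵥ x)) * (y ⬝ᵥ (P *ᵥ y)) := by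
  have hsymm : y ⬝ᵥ (P *ᵥ x) = x ⬝ᵥ (P *ᵥ y) := by
    rw [dotProduct_mulVec, ← mulVec_transpose, ← conjTranspose_eq_transpose_of_trivial,
      hP.isHermitian.eq, dotProduct_comm]
  have hquad : ∀ t : ℝ,
      0 ≤ (y ⬝ᵥ (P *ᵥ y)) * (t * t) + 2 * (x ⬝ᵥ (P *ᵥ y)) * t + x ⬝ᵥ (P *ᵥ x) := fun t => by
    have := hP.dotProduct_mulVec_nonneg (x + t • y)
    simp only [star_trivial, mulVec_add, mulVec_smul, dotProduct_add, add_dotProduct,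
      dotProduct_smul, smul_dotProduct, smul_eq_mul, hsymm] at this
    linarith
  have := discrim_le_zero hquad
  rw [discrim] at this
  linarith

theorem mulVec_injective_of_mul_dotProduct_self_le {A : Matrix m n ℝ} {c : ℝ} (hc : 0 < c)
    (hA : ∀ x, c * (x ⬝ᵥ x) ≤ (A *ᵥ x) ⬝ᵥ (A *ᵥ x)) : Function.Injective A.mulVec := by
  intro x y hxy
  have h := hA (x - y)
  rw [mulVec_sub, hxy, sub_self, dotProduct_zero] at h
  have : (x - y) ⬝ᵥ (x - y) = 0 :=
    le_antisymm (nonpos_of_mul_nonpos_right h hc) (dotProduct_star_self_nonneg (x - y))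
  exact sub_eq_zero.mp (dotProduct_self_eq_zero.mp this)

theorem posDef_transpose_mul_self_of_mul_dotProduct_self_le {A : Matrix m n ℝ} {c : ℝ}
    (hc : 0 < c) (hA : ∀ x, c * (x ⬝ᵥ x) ≤ (A *ᵥ x) ⬝ᵥ (A *ᵥ x)) : (Aᵀ * A).PosDef := by
  simpa [conjTranspose_eq_transpose_of_trivial] using
    PosDef.conjTranspose_mul_self A (mulVec_injective_of_mul_dotProduct_self_le hc hA)

variable [DecidableEq n]

theorem mul_dotProduct_inv_mulVec_le {M : Matrix n n ℝ} (hdet : IsUnit M.det) {c : ℝ}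
    (hc : 0 ≤ c) (hM : ∀ x, c * (x ⬝ᵥ x) ≤ x ⬝ᵥ (M *ᵥ x)) (y : n → ℝ) :
    c * (y ⬝ᵥ (M⁻¹ *ᵥ y)) ≤ y ⬝ᵥ y := by
  set z := M⁻¹ *ᵥ y
  have hz : M *ᵥ z = y := by rw [mulVec_mulVec, mul_nonsing_inv M hdet, one_mulVec]
  have hq : y ⬝ᵥ z = z ⬝ᵥ (M *ᵥ z) := by rw [hz, dotProduct_comm]
  have hcz : c * (z ⬝ᵥ z) ≤ y ⬝ᵥ z := hq ▸ hM z
  have hcs : (y ⬝ᵥ z) ^ 2 ≤ (y ⬝ᵥ y) * (z ⬝ᵥ z) := by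
    simpa using PosSemidef.one.sq_dotProduct_mulVec_le y z
  have hzz : 0 ≤ z ⬝ᵥ z := dotProduct_star_self_nonneg z
  have hyy : 0 ≤ y ⬝ᵥ y := dotProduct_star_self_nonneg y
  rcases (mul_nonneg hc hzz).trans hcz |>.eq_or_lt with hq0 | hq0
  · rwa [← hq0, mul_zero]
  · refine le_of_mul_le_mul_right ?_ hq0
    calc c * (y ⬝ᵥ z) * (y ⬝ᵥ z) = c * (y ⬝ᵥ z) ^ 2 := by ring
      _ ≤ c * ((y ⬝ᵥ y) * (z ⬝ᵥ z)) := mul_le_mul_of_nonneg_left hcs hc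
      _ = (y ⬝ᵥ y) * (c * (z ⬝ᵥ z)) := by ring
      _ ≤ (y ⬝ᵥ y) * (y ⬝ᵥ z) := mul_le_mul_of_nonneg_left hcz hyy

theorem dotProduct_transpose_mulVec_inv_le (A : Matrix m n ℝ) (hdet : IsUnit (Aᵀ * A).det)
    (u : m → ℝ) : (Aᵀ *ᵥ u) ⬝ᵥ ((Aᵀ * A)⁻¹ *ᵥ (Aᵀ *ᵥ u)) ≤ u ⬝ᵥ u := by
  set z := (Aᵀ * A)⁻¹ *ᵥ (Aᵀ *ᵥ u)
  have hz : (Aᵀ * A) *ᵥ z = Aᵀ *ᵥ u := by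
    rw [mulVec_mulVec, mul_nonsing_inv _ hdet, one_mulVec]
  have hcross : u ⬝ᵥ (A *ᵥ z) = (Aᵀ *ᵥ u) ⬝ᵥ z := by
    rw [dotProduct_mulVec, mulVec_transpose]
  have hnorm : (A *ᵥ z) ⬝ᵥ (A *ᵥ z) = (Aᵀ *ᵥ u) ⬝ᵥ z := by
    rw [← dotProduct_transpose_mul_self_mulVec, hz, dotProduct_comm]
  -- `A z` is the orthogonal projection of `u` onto the column space of `A`.
  have := dotProduct_star_self_nonneg (u - A *ᵥ z)
  simp only [star_trivial, sub_dotProduct, dotProduct_sub, hcross, hnorm,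
    dotProduct_comm (A *ᵥ z) u] at this
  linarith

end Real

end Matrix

theorem sq_one_add_le_exp_two_mul {x : ℝ} (hx : -1 ≤ x) : (1 + x) ^ 2 ≤ Real.exp (2 * x) := by
  rw [two_mul, Real.exp_add, ← sq]
  exact pow_le_pow_left₀ (by linarith) (by linarith [Real.add_one_le_exp x]) 2

theorem one_add_sq_add_mul_one_sub_le {α β γ s : ℝ} (hs : 0 ≤ s) (hα₀ : 0 ≤ α) (hα : α ≤ s ^ 2)
    (hγ : γ ≤ 1) (hβ : β ^ 2 ≤ α * γ) : (1 + β) ^ 2 + α * (1 - γ) ≤ (1 + s) ^ 2 := by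
  have hβs : β ≤ s := abs_le_of_sq_le_sq' (by nlinarith) hs |>.2
  nlinarith

theorem sq_mul_dotProduct_self_le_of_mul_sqrt_le {m n : Type*} [Fintype m] [Fintype n]
    {A : Matrix m n ℝ} {w : ℝ} (hw : 0 ≤ w)
    (hA : ∀ x : n → ℝ, w * √(∑ j, x j ^ 2) ≤ √(∑ k, (A *ᵥ x) k ^ 2)) (x : n → ℝ) :
    w ^ 2 * (x ⬝ᵥ x) ≤ (A *ᵥ x) ⬝ᵥ (A *ᵥ x) := by
  have h := hA x
  simp only [← sq, dotProduct] at h ⊢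
  rwa [← Real.sqrt_sq hw, ← Real.sqrt_mul (sq_nonneg w),
    Real.sqrt_le_sqrt_iff (Finset.sum_nonneg fun _ _ => sq_nonneg _)] at h

theorem det_transpose_mul_self_add_vecMulVec_single_le {m n : Type*} [Fintype m] [DecidableEq m]
    [Fintype n] [DecidableEq n] {w : ℝ} (hw : 0 < w) (A : Matrix m n ℝ) (i : m) {v : n → ℝ}
    (hv : v ⬝ᵥ v = 1) (hA : ∀ x, w ^ 2 * (x ⬝ᵥ x) ≤ (A *ᵥ x) ⬝ᵥ (A *ᵥ x)) :
    ((A + vecMulVec (Pi.single i 1) v)ᵀ * (A + vecMulVec (Pi.single i 1) v)).det ≤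
      Real.exp (2 / w) * (Aᵀ * A).det := by
  have hM : (Aᵀ * A).PosDef :=
    posDef_transpose_mul_self_of_mul_dotProduct_self_le (by positivity) hA
  have hdet : IsUnit (Aᵀ * A).det := hM.det_pos.ne'.isUnit
  have hMv : ∀ x, w ^ 2 * (x ⬝ᵥ x) ≤ x ⬝ᵥ ((Aᵀ * A) *ᵥ x) := fun x => by
    rw [dotProduct_transpose_mul_self_mulVec]; exact hA x
  have hsymm : (Aᵀ * A).IsSymm := by
    simpa [conjTranspose_eq_transpose_of_trivial] using hM.isHermitian
  have hα₀ : 0 ≤ v ⬝ᵥ ((Aᵀ * A)⁻¹ *ᵥ v) := by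
    simpa using hM.inv.posSemidef.dotProduct_mulVec_nonneg v
  have hα : v ⬝ᵥ ((Aᵀ * A)⁻¹ *ᵥ v) ≤ w⁻¹ ^ 2 := by
    rw [inv_pow, ← mul_one (w ^ 2)⁻¹, le_inv_mul_iff₀ (by positivity), ← hv]
    exact mul_dotProduct_inv_mulVec_le hdet (sq_nonneg w) hMv v
  have hγ : A i ⬝ᵥ ((Aᵀ * A)⁻¹ *ᵥ A i) ≤ 1 := by
    simpa [mulVec_single_one, row_def] using
      dotProduct_transpose_mulVec_inv_le A hdet (Pi.single i 1)
  have hβ := hM.inv.posSemidef.sq_dotProduct_mulVec_le v (A i)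
  rw [transpose_mul_self_add_vecMulVec_single,
    det_add_vecMulVec_add_vecMulVec_add_vecMulVec hsymm hdet, mul_comm]
  refine mul_le_mul_of_nonneg_right ?_ hM.det_pos.le
  calc _ ≤ (1 + w⁻¹) ^ 2 := one_add_sq_add_mul_one_sub_le (inv_nonneg.mpr hw.le) hα₀ hα hγ hβ
    _ ≤ Real.exp (2 / w) := by
      rw [div_eq_mul_inv]
      exact sq_one_add_le_exp_two_mul (by linarith [inv_nonneg.mpr hw.le])

/-- Inequality (5): determinant ratio bound under a rank-one row perturbation, when all
singular values of `A` and `A' = A + e_i vᵀ` are at least `w`. -/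
theorem det_ratio_bound {n d : ℕ} {w : ℝ} (hw : 0 < w)
    {A A' : Matrix (Fin n) (Fin d) ℝ} {i : Fin n} {v : Fin d → ℝ}
    (hv : ∑ j, v j ^ 2 = 1)
    (hA' : A' = A + Matrix.of fun k j => if k = i then v j else 0)
    (hAsv : ∀ x : Fin d → ℝ,
      w * Real.sqrt (∑ j, x j ^ 2) ≤ Real.sqrt (∑ k, (A *ᵥ x) k ^ 2))
    (hA'sv : ∀ x : Fin d → ℝ,
      w * Real.sqrt (∑ j, x j ^ 2) ≤ Real.sqrt (∑ k, (A' *ᵥ x) k ^ 2)) :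
    Real.exp (-2 / w) ≤ (A'ᵀ * A').det / (Aᵀ * A).det ∧
    (A'ᵀ * A').det / (Aᵀ * A).det ≤ Real.exp (2 / w) := by
  have hvv : v ⬝ᵥ v = 1 := by simpa [dotProduct, sq] using hv
  have hA'v : A' = A + vecMulVec (Pi.single i 1) v := by
    rw [hA']; congr 1; ext k j; by_cases h : k = i <;> simp [h, vecMulVec_apply]
  have hAv : A = A' + vecMulVec (Pi.single i 1) (-v) := by
    rw [hA'v, vecMulVec_neg, add_neg_cancel_right]
  have hA := sq_mul_dotProduct_self_le_of_mul_sqrt_le hw.le hAsv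
  have hup : (A'ᵀ * A').det ≤ Real.exp (2 / w) * (Aᵀ * A).det :=
    hA'v ▸ det_transpose_mul_self_add_vecMulVec_single_le hw A i hvv hA
  have hdown : (Aᵀ * A).det ≤ Real.exp (2 / w) * (A'ᵀ * A').det :=
    hAv ▸ det_transpose_mul_self_add_vecMulVec_single_le hw A' i (by simpa using hvv)
      (sq_mul_dotProduct_self_le_of_mul_sqrt_le hw.le hA'sv)
  have hD := (posDef_transpose_mul_self_of_mul_dotProduct_self_le (by positivity) hA).det_pos
  constructor
  · rwa [le_div_iff₀ hD, neg_div, Real.exp_neg, inv_mul_le_iff₀ (Real.exp_pos _)]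
  · rwa [div_le_iff₀ hD]
end

section
/- Pseudoinverse difference identity for a rank-one Laplacian update: Let L and L′ be real symmetric positive semidefinite n×n matrices with L′ = L + c·e_{ab}e_{ab}ᵀ for some c > 0 and some a ≠ b, where e_{ab} = e_a − e_b. Suppose the kernels of L and of L′ both equal the span of the all-ones vector. Let P and P′ be the Moore–Penrose pseudoinverses of L and L′. Then for every x ∈ ℝ^n orthogonal to the all-ones vector, xᵀPx − xᵀP′x = c·(xᵀP e_{ab})·(e_{ab}ᵀ P′ x). -/
/-!
Since `L` is symmetric with `ker L = span 𝟙`, the product `L P` fixes every vector orthogonal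
to `𝟙`, and likewise for `L' P'`. With `u = P x`, `u' = P' x` and `e = e_a - e_b` this gives
`x = L u = L' u'`, so `xᵀu - xᵀu' = u'ᵀL'u - u'ᵀLu = c (eᵀu)(eᵀu')`. Finally `xᵀPe = uᵀLPe = uᵀe`, as `e ⊥ 𝟙` too.
-/

open Matrix

namespace Matrix

variable {m R : Type*} [Fintype m]

section CommRing

variable [CommRing R]

theorem IsSymm.mulVec_dotProduct {L : Matrix m m R} (hL : L.IsSymm) (u w : m → R) :
    L *ᵥ u ⬝ᵥ w = u ⬝ᵥ L *ᵥ w := by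
  rw [dotProduct_mulVec, ← mulVec_transpose, hL.eq]

theorem IsSymm.mul_mul_eq_self_of_mul_mul_eq_self {L P : Matrix m m R} (hL : L.IsSymm)
    (hLPL : L * P * L = L) (hLP : (L * P).IsSymm) : L * (L * P) = L :=
  calc L * (L * P) = Lᵀ * (L * P)ᵀ := by rw [hL.eq, hLP.eq]
    _ = L := by rw [← transpose_mul, hLPL, hL.eq]

theorem IsSymm.dotProduct_sub_dotProduct_of_eq_add_smul_vecMulVec {L L' : Matrix m m R}
    (hL' : L'.IsSymm) {c : R} {e : m → R} (hL'def : L' = L + c • vecMulVec e e)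
    {x u u' : m → R} (hu : L *ᵥ u = x) (hu' : L' *ᵥ u' = x) :
    x ⬝ᵥ u - x ⬝ᵥ u' = c * (e ⬝ᵥ u) * (e ⬝ᵥ u') := by
  have hL'u : u' ⬝ᵥ L' *ᵥ u = u' ⬝ᵥ L *ᵥ u + c * (e ⬝ᵥ u) * (e ⬝ᵥ u') := by
    rw [hL'def, add_mulVec, smul_mulVec, vecMulVec_mulVec, dotProduct_add, dotProduct_smul,
      op_smul_eq_smul, dotProduct_smul, smul_eq_mul, smul_eq_mul, dotProduct_comm u' e]
    ring
  rw [← hu', hL'.mulVec_dotProduct, hL'u, hu', ← hu, dotProduct_comm (L *ᵥ u)]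
  ring

end CommRing

variable [Field R] [LinearOrder R] [IsStrictOrderedRing R]

theorem IsSymm.mulVec_mulVec_eq_self {L P : Matrix m m R} (hL : L.IsSymm)
    (hLPL : L * P * L = L) (hLP : (L * P).IsSymm) {v : m → R}
    (hker : ∀ y, L *ᵥ y = 0 ↔ ∃ t : R, y = t • v) {x : m → R} (hx : x ⬝ᵥ v = 0) :
    L *ᵥ P *ᵥ x = x := by
  set w := L *ᵥ P *ᵥ x - x
  obtain ⟨t, hw⟩ : ∃ t : R, w = t • v := by
    rw [← hker, mulVec_sub, mulVec_mulVec, mulVec_mulVec, Matrix.mul_assoc,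
      hL.mul_mul_eq_self_of_mul_mul_eq_self hLPL hLP, sub_self]
  have hwv : w ⬝ᵥ v = 0 := by
    rw [sub_dotProduct, hL.mulVec_dotProduct, (hker v).2 ⟨1, (one_smul R v).symm⟩,
      dotProduct_zero, hx, sub_self]
  have hww : w ⬝ᵥ w = 0 := by
    nth_rw 2 [hw]
    rw [dotProduct_smul, hwv, smul_zero]
  exact sub_eq_zero.1 (dotProduct_self_eq_zero.1 hww)

end Matrix

theorem pseudoinverse_difference_rank_one_general {n : ℕ} {L L' P P' : Matrix (Fin n) (Fin n) ℝ}
    (hL : L.PosSemidef) (hL' : L'.PosSemidef)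
    {c : ℝ} {a b : Fin n}
    (hL'def : L' = L + c • Matrix.vecMulVec
      (Pi.single a 1 - Pi.single b 1) (Pi.single a 1 - Pi.single b 1))
    (hker : ∀ x : Fin n → ℝ, L *ᵥ x = 0 ↔ ∃ t : ℝ, x = fun _ => t)
    (hker' : ∀ x : Fin n → ℝ, L' *ᵥ x = 0 ↔ ∃ t : ℝ, x = fun _ => t)
    (hP : L * P * L = L ∧ P * L * P = P ∧ (L * P)ᵀ = L * P ∧ (P * L)ᵀ = P * L)
    (hP' : L' * P' * L' = L' ∧ P' * L' * P' = P' ∧ (L' * P')ᵀ = L' * P' ∧ (P' * L')ᵀ = P' * L')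
    (x : Fin n → ℝ) (hx : (x ⬝ᵥ fun _ => (1 : ℝ)) = 0) :
    x ⬝ᵥ (P *ᵥ x) - x ⬝ᵥ (P' *ᵥ x)
      = c * (x ⬝ᵥ (P *ᵥ (Pi.single a 1 - Pi.single b 1)))
          * ((Pi.single a 1 - Pi.single b 1) ⬝ᵥ (P' *ᵥ x)) := by
  set e : Fin n → ℝ := Pi.single a 1 - Pi.single b 1
  have hconst (y : Fin n → ℝ) : (∃ t : ℝ, y = fun _ => t) ↔ ∃ t : ℝ, y = t • fun _ => 1 := by
    simp only [Pi.smul_def, smul_eq_mul, mul_one]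
  have hLs : L.IsSymm := isHermitian_iff_isSymm.1 hL.isHermitian
  have hL's : L'.IsSymm := isHermitian_iff_isSymm.1 hL'.isHermitian
  have hLP {y : Fin n → ℝ} (hy : (y ⬝ᵥ fun _ => (1 : ℝ)) = 0) : L *ᵥ P *ᵥ y = y :=
    hLs.mulVec_mulVec_eq_self hP.1 hP.2.2.1 (fun z => (hker z).trans (hconst z)) hy
  have hL'P' : L' *ᵥ P' *ᵥ x = x :=
    hL's.mulVec_mulVec_eq_self hP'.1 hP'.2.2.1 (fun z => (hker' z).trans (hconst z)) hx
  have he : (e ⬝ᵥ fun _ => (1 : ℝ)) = 0 := by simp [e]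
  have hxPe : x ⬝ᵥ P *ᵥ e = e ⬝ᵥ P *ᵥ x :=
    calc x ⬝ᵥ P *ᵥ e = L *ᵥ P *ᵥ x ⬝ᵥ P *ᵥ e := by rw [hLP hx]
      _ = e ⬝ᵥ P *ᵥ x := by rw [hLs.mulVec_dotProduct, hLP he, dotProduct_comm]
  rw [hxPe]
  exact hL's.dotProduct_sub_dotProduct_of_eq_add_smul_vecMulVec hL'def (hLP hx) hL'P'

/-- Pseudoinverse difference identity for a rank-one Laplacian update
`L' = L + c·e_{ab}e_{ab}ᵀ`, when both kernels equal the span of the all-ones vector: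
for `x ⊥ 𝟙`, `xᵀPx − xᵀP'x = c·(xᵀP e_{ab})·(e_{ab}ᵀ P' x)`. -/
theorem pseudoinverse_difference_rank_one {n : ℕ} {L L' P P' : Matrix (Fin n) (Fin n) ℝ}
    (hL : L.PosSemidef) (hL' : L'.PosSemidef)
    {c : ℝ} (hc : 0 < c) {a b : Fin n} (hab : a ≠ b)
    (hL'def : L' = L + c • Matrix.vecMulVec
      (Pi.single a 1 - Pi.single b 1) (Pi.single a 1 - Pi.single b 1))
    (hker : ∀ x : Fin n → ℝ, L *ᵥ x = 0 ↔ ∃ t : ℝ, x = fun _ => t)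
    (hker' : ∀ x : Fin n → ℝ, L' *ᵥ x = 0 ↔ ∃ t : ℝ, x = fun _ => t)
    (hP : L * P * L = L ∧ P * L * P = P ∧ (L * P)ᵀ = L * P ∧ (P * L)ᵀ = P * L)
    (hP' : L' * P' * L' = L' ∧ P' * L' * P' = P' ∧ (L' * P')ᵀ = L' * P' ∧ (P' * L')ᵀ = P' * L')
    (x : Fin n → ℝ) (hx : (x ⬝ᵥ fun _ => (1 : ℝ)) = 0) :
    x ⬝ᵥ (P *ᵥ x) - x ⬝ᵥ (P' *ᵥ x)
      = c * (x ⬝ᵥ (P *ᵥ (Pi.single a 1 - Pi.single b 1)))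
          * ((Pi.single a 1 - Pi.single b 1) ⬝ᵥ (P' *ᵥ x)) :=
  pseudoinverse_difference_rank_one_general hL hL' hL'def hker hker' hP hP' x hx
end

section
/- Norm comparison for shifted Gram square roots (Stage 2 lemma): Let w > 0, let A be an n×d real matrix, let A′ = A + e_i vᵀ for some index i and some v ∈ ℝ^d with ‖v‖₂ ≤ 1, and set B = (AᵀA + w²·I_d)^{1/2} and B′ = (A′ᵀA′ + w²·I_d)^{1/2}. Then for every z ∈ ℝ^d, ‖Bz‖₂ ≤ ‖B′z‖₂ + ‖z‖₂ ≤ (1 + 1/w)·‖B′z‖₂, and symmetrically ‖B′z‖₂ ≤ (1 + 1/w)·‖Bz‖₂. -/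
/-!
Since `B` is symmetric with `B * B = AᵀA + w²I`, we have `‖Bz‖² = ‖Az‖² + w²‖z‖²`, and likewise
for `B'`. The map `t ↦ √(t² + c)` is 1-Lipschitz, and `‖A'z‖` differs from `‖Az‖` by at most
`|⟪v, z⟫| ≤ ‖z‖`; hence `‖Bz‖ ≤ ‖B'z‖ + ‖z‖`. Finally `w‖z‖ ≤ ‖B'z‖` turns the additive `‖z‖`
into the factor `1 + 1/w`.
-/

open Matrix WithLp

theorem sqrt_sum_sq_eq_norm_toLp {ι : Type*} [Fintype ι] (x : ι → ℝ) :
    √(∑ k, x k ^ 2) = ‖toLp 2 x‖ := by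
  simp [EuclideanSpace.norm_eq]

theorem norm_toLp_sq_eq_dotProduct {ι : Type*} [Fintype ι] (x : ι → ℝ) :
    ‖toLp 2 x‖ ^ 2 = x ⬝ᵥ x := by
  rw [← real_inner_self_eq_norm_sq, EuclideanSpace.inner_toLp_toLp, star_trivial]

theorem Matrix.mulVec_dotProduct_mulVec_self {m n R : Type*} [Fintype m] [Fintype n]
    [CommSemiring R] (M : Matrix m n R) (z : n → R) :
    (M *ᵥ z) ⬝ᵥ (M *ᵥ z) = z ⬝ᵥ ((Mᵀ * M) *ᵥ z) := by
  rw [← mulVec_mulVec, mulVec_transpose, dotProduct_comm z, dotProduct_mulVec]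

theorem Real.sqrt_sq_add_le_sqrt_sq_add_add_abs_sub {x y c : ℝ} (hc : 0 ≤ c) :
    √(x ^ 2 + c) ≤ √(y ^ 2 + c) + |x - y| := by
  have hy : |y| ≤ √(y ^ 2 + c) := Real.abs_le_sqrt (by linarith)
  have hyxy : y * (x - y) ≤ |y| * |x - y| := (le_abs_self _).trans_eq (abs_mul _ _)
  rw [Real.sqrt_le_iff]
  refine ⟨by positivity, ?_⟩
  nlinarith [Real.sq_sqrt (show 0 ≤ y ^ 2 + c by positivity), sq_abs (x - y),
    mul_le_mul_of_nonneg_right hy (abs_nonneg (x - y))]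

section ShiftedGram

variable {m n : Type*} [Fintype m] [Fintype n] [DecidableEq n]
  {A A' : Matrix m n ℝ} {B B' : Matrix n n ℝ} {c : ℝ}

theorem norm_mulVec_sq_of_mul_self_eq (hB : B.IsHermitian) (hB2 : B * B = Aᵀ * A + c • 1)
    (z : n → ℝ) : ‖toLp 2 (B *ᵥ z)‖ ^ 2 = ‖toLp 2 (A *ᵥ z)‖ ^ 2 + c * ‖toLp 2 z‖ ^ 2 := by
  have hBt : Bᵀ = B := by simpa [conjTranspose_eq_transpose_of_trivial] using hB.eq
  simp only [norm_toLp_sq_eq_dotProduct, mulVec_dotProduct_mulVec_self, hBt, hB2]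
  rw [add_mulVec, smul_mulVec, one_mulVec, dotProduct_add, dotProduct_smul, smul_eq_mul]

theorem sqrt_mul_norm_le_norm_mulVec_of_mul_self_eq (hc : 0 ≤ c) (hB : B.IsHermitian)
    (hB2 : B * B = Aᵀ * A + c • 1) (z : n → ℝ) : √c * ‖toLp 2 z‖ ≤ ‖toLp 2 (B *ᵥ z)‖ := by
  refine le_of_pow_le_pow_left₀ two_ne_zero (norm_nonneg _) ?_
  rw [norm_mulVec_sq_of_mul_self_eq hB hB2, mul_pow, Real.sq_sqrt hc]
  exact le_add_of_nonneg_left (sq_nonneg _)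

theorem norm_mulVec_le_norm_mulVec_add_of_mul_self_eq (hc : 0 ≤ c)
    (hB : B.IsHermitian) (hB2 : B * B = Aᵀ * A + c • 1)
    (hB' : B'.IsHermitian) (hB'2 : B' * B' = A'ᵀ * A' + c • 1) (z : n → ℝ) :
    ‖toLp 2 (B *ᵥ z)‖ ≤ ‖toLp 2 (B' *ᵥ z)‖ + |‖toLp 2 (A *ᵥ z)‖ - ‖toLp 2 (A' *ᵥ z)‖| := by
  rw [← Real.sqrt_sq (norm_nonneg (toLp 2 (B *ᵥ z))),
    ← Real.sqrt_sq (norm_nonneg (toLp 2 (B' *ᵥ z))),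
    norm_mulVec_sq_of_mul_self_eq hB hB2, norm_mulVec_sq_of_mul_self_eq hB' hB'2]
  exact Real.sqrt_sq_add_le_sqrt_sq_add_add_abs_sub (by positivity)

end ShiftedGram

theorem add_single_row_mulVec {m n R : Type*} [Fintype n] [DecidableEq m] [Semiring R]
    (A : Matrix m n R) (i : m) (v z : n → R) :
    (A + of fun k j => if k = i then v j else 0) *ᵥ z = A *ᵥ z + Pi.single i (v ⬝ᵥ z) := by
  ext k
  by_cases hk : k = i <;> simp [mulVec, dotProduct, hk, add_mul, Finset.sum_add_distrib]

theorem abs_norm_add_single_row_mulVec_sub_le {m n : Type*} [Fintype m] [Fintype n]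
    [DecidableEq m] (A : Matrix m n ℝ) (i : m) (v z : n → ℝ) :
    |‖toLp 2 ((A + of fun k j => if k = i then v j else 0) *ᵥ z)‖ - ‖toLp 2 (A *ᵥ z)‖|
      ≤ ‖toLp 2 v‖ * ‖toLp 2 z‖ := by
  rw [add_single_row_mulVec, toLp_add]
  calc _ ≤ ‖toLp 2 (Pi.single i (v ⬝ᵥ z) : m → ℝ)‖ :=
        (abs_norm_sub_norm_le _ _).trans_eq (by rw [add_sub_cancel_left])
    _ = |inner ℝ (toLp 2 v) (toLp 2 z)| := by
        rw [PiLp.toLp_single, PiLp.norm_single, EuclideanSpace.inner_toLp_toLp, star_trivial,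
          dotProduct_comm, Real.norm_eq_abs]
    _ ≤ _ := abs_real_inner_le_norm _ _

theorem add_le_one_add_inv_mul {w s b : ℝ} (hw : 0 < w) (h : w * s ≤ b) :
    b + s ≤ (1 + 1 / w) * b := by
  have : s ≤ b / w := (le_div_iff₀' hw).2 h
  linarith [show (1 + 1 / w) * b = b + b / w by ring]

/-- Stage 2 lemma: norm comparison for the shifted Gram square roots
`B = (AᵀA + w²I)^{1/2}` and `B' = (A'ᵀA' + w²I)^{1/2}` where `A' = A + e_i vᵀ`, `‖v‖₂ ≤ 1`. -/
theorem shifted_gram_sqrt_norm_comparison {n d : ℕ} {w : ℝ} (hw : 0 < w)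
    {A A' : Matrix (Fin n) (Fin d) ℝ} {i : Fin n} {v : Fin d → ℝ}
    (hv : Real.sqrt (∑ j, v j ^ 2) ≤ 1)
    (hA' : A' = A + Matrix.of fun k j => if k = i then v j else 0)
    {B B' : Matrix (Fin d) (Fin d) ℝ}
    (hB : B.PosSemidef)
    (hB2 : B * B = Aᵀ * A + (w ^ 2) • (1 : Matrix (Fin d) (Fin d) ℝ))
    (hB' : B'.PosSemidef)
    (hB'2 : B' * B' = A'ᵀ * A' + (w ^ 2) • (1 : Matrix (Fin d) (Fin d) ℝ))
    (z : Fin d → ℝ) :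
    (Real.sqrt (∑ k, (B *ᵥ z) k ^ 2)
        ≤ Real.sqrt (∑ k, (B' *ᵥ z) k ^ 2) + Real.sqrt (∑ j, z j ^ 2) ∧
      Real.sqrt (∑ k, (B' *ᵥ z) k ^ 2) + Real.sqrt (∑ j, z j ^ 2)
        ≤ (1 + 1 / w) * Real.sqrt (∑ k, (B' *ᵥ z) k ^ 2)) ∧
    Real.sqrt (∑ k, (B' *ᵥ z) k ^ 2) ≤ (1 + 1 / w) * Real.sqrt (∑ k, (B *ᵥ z) k ^ 2) := by
  simp only [sqrt_sum_sq_eq_norm_toLp] at hv ⊢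
  have hw2 : 0 ≤ w ^ 2 := sq_nonneg w
  have hAA' : |‖toLp 2 (A *ᵥ z)‖ - ‖toLp 2 (A' *ᵥ z)‖| ≤ ‖toLp 2 z‖ := by
    rw [abs_sub_comm, hA']
    exact (abs_norm_add_single_row_mulVec_sub_le A i v z).trans
      (mul_le_of_le_one_left (norm_nonneg _) hv)
  have hzB : w * ‖toLp 2 z‖ ≤ ‖toLp 2 (B *ᵥ z)‖ := by
    simpa [Real.sqrt_sq hw.le] using
      sqrt_mul_norm_le_norm_mulVec_of_mul_self_eq hw2 hB.isHermitian hB2 z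
  have hzB' : w * ‖toLp 2 z‖ ≤ ‖toLp 2 (B' *ᵥ z)‖ := by
    simpa [Real.sqrt_sq hw.le] using
      sqrt_mul_norm_le_norm_mulVec_of_mul_self_eq hw2 hB'.isHermitian hB'2 z
  refine ⟨⟨?_, add_le_one_add_inv_mul hw hzB'⟩, ?_⟩
  · exact (norm_mulVec_le_norm_mulVec_add_of_mul_self_eq hw2 hB.isHermitian hB2
      hB'.isHermitian hB'2 z).trans (by gcongr)
  · refine (norm_mulVec_le_norm_mulVec_add_of_mul_self_eq hw2 hB'.isHermitian hB'2
      hB.isHermitian hB2 z).trans (le_trans ?_ (add_le_one_add_inv_mul hw hzB))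
    rw [abs_sub_comm]
    gcongr
end

section
/- Tail bound for the product of two Gaussian linear forms: Let m be a positive integer, u, v ∈ ℝ^m, δ ∈ (0,1), and let γ_m be the standard Gaussian measure on ℝ^m. Then γ_m{ y ∈ ℝ^m : |⟨u,y⟩·⟨v,y⟩| > 2·ln(4/δ)·‖u‖₂·‖v‖₂ } ≤ δ. -/
/-!
Each linear form `⟨w, y⟩ = ∑ wᵢ yᵢ` is a sum of independent Gaussians, hence sub-Gaussian with
variance proxy `‖w‖²`, so `|⟨w, y⟩| > √(2 L) ‖w‖` has probability at most `2 e^{-L}`. With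
`L = ln (4/δ)`, if `|⟨u, y⟩ ⟨v, y⟩| > 2 L ‖u‖ ‖v‖` then one of the two factors exceeds its
threshold, and a union bound over the two events gives `4 e^{-L} = δ`.
-/

open MeasureTheory ProbabilityTheory Matrix

noncomputable section

open Real NNReal

lemma lt_abs_or_lt_abs_of_mul_lt_abs_mul {a b A B : ℝ} (hA : 0 ≤ A) (h : A * B < |a * b|) :
    A < |a| ∨ B < |b| := by
  by_contra! hab
  rw [abs_mul] at h
  exact h.not_ge (mul_le_mul hab.1 hab.2 (abs_nonneg b) hA)

namespace ProbabilityTheory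

lemma hasSubgaussianMGF_id_gaussianReal (v : ℝ≥0) :
    HasSubgaussianMGF id v (gaussianReal 0 v) where
  integrable_exp_mul := integrable_exp_mul_gaussianReal
  mgf_le t := by simp [mgf_id_gaussianReal]

namespace HasSubgaussianMGF

variable {Ω : Type*} {mΩ : MeasurableSpace Ω} {μ : Measure Ω} {X : Ω → ℝ} {c : ℝ≥0}

lemma measureReal_abs_ge_le (h : HasSubgaussianMGF X c μ) {ε : ℝ} (hε : 0 ≤ ε) :
    μ.real {ω | ε ≤ |X ω|} ≤ 2 * exp (-ε ^ 2 / (2 * c)) := by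
  have h_split : {ω | ε ≤ |X ω|} = {ω | ε ≤ X ω} ∪ {ω | ε ≤ (-X) ω} := by
    ext ω
    simp [le_abs]
  calc μ.real {ω | ε ≤ |X ω|}
      ≤ μ.real {ω | ε ≤ X ω} + μ.real {ω | ε ≤ (-X) ω} := h_split ▸ measureReal_union_le _ _
    _ ≤ exp (-ε ^ 2 / (2 * c)) + exp (-ε ^ 2 / (2 * c)) :=
        add_le_add (h.measure_ge_le hε) (h.neg.measure_ge_le hε)
    _ = 2 * exp (-ε ^ 2 / (2 * c)) := by ring

end HasSubgaussianMGF

end ProbabilityTheory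

section StdGaussianPi

variable {ι : Type*} [Fintype ι]

instance : IsProbabilityMeasure (stdGaussianPi ι) := by
  unfold stdGaussianPi
  infer_instance

lemma hasSubgaussianMGF_mul_eval_stdGaussianPi (a : ℝ) (i : ι) :
    HasSubgaussianMGF (fun y : ι → ℝ ↦ a * y i) (‖a‖₊ ^ 2) (stdGaussianPi ι) := by
  have h : HasSubgaussianMGF (fun x ↦ a * x) (‖a‖₊ ^ 2) (gaussianReal 0 1) := by
    convert (hasSubgaussianMGF_id_gaussianReal 1).const_mul a using 1
    · rfl
    · ext
      simp only [coe_pow, coe_nnnorm, Real.norm_eq_abs, sq_abs]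
      exact (mul_one _).symm
  rw [← (measurePreserving_eval (fun _ : ι ↦ gaussianReal 0 1) i).map_eq] at h
  exact h.of_map (measurable_pi_apply i).aemeasurable

lemma hasSubgaussianMGF_dotProduct_stdGaussianPi (w : ι → ℝ) :
    HasSubgaussianMGF (fun y ↦ w ⬝ᵥ y) (∑ i, ‖w i‖₊ ^ 2) (stdGaussianPi ι) := by
  have h_indep : iIndepFun (fun i (y : ι → ℝ) ↦ w i * y i) (stdGaussianPi ι) :=
    iIndepFun_pi (X := fun i x ↦ w i * x) fun i ↦ by fun_prop
  simpa [dotProduct, mul_comm] using HasSubgaussianMGF.sum_of_iIndepFun h_indep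
    (s := Finset.univ) fun i _ ↦ hasSubgaussianMGF_mul_eval_stdGaussianPi (w i) i

lemma measureReal_lt_abs_dotProduct_le (w : ι → ℝ) {L : ℝ} (hL : 0 ≤ L) :
    (stdGaussianPi ι).real {y | √(2 * L) * √(∑ i, w i ^ 2) < |w ⬝ᵥ y|} ≤ 2 * exp (-L) := by
  have hS_nonneg : 0 ≤ ∑ i, w i ^ 2 := Finset.sum_nonneg fun i _ ↦ sq_nonneg (w i)
  rcases hS_nonneg.eq_or_lt with hS | hS
  · have hw : w = 0 := funext fun i ↦ by
      have := (Fintype.sum_eq_zero_iff_of_nonneg fun i ↦ sq_nonneg (w i)).mp hS.symm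
      simpa using congrFun this i
    simp [hw, (exp_pos _).le]
  have hc : ((∑ i, ‖w i‖₊ ^ 2 : ℝ≥0) : ℝ) = ∑ i, w i ^ 2 := by simp
  have h_exponent : -(√(2 * L) * √(∑ i, w i ^ 2)) ^ 2 / (2 * ∑ i, w i ^ 2) = -L := by
    rw [mul_pow, sq_sqrt (by positivity), sq_sqrt hS_nonneg]
    field_simp
  have h_tail := (hasSubgaussianMGF_dotProduct_stdGaussianPi w).measureReal_abs_ge_le
    (ε := √(2 * L) * √(∑ i, w i ^ 2)) (by positivity)
  rw [hc, h_exponent] at h_tail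
  exact (measureReal_mono (Set.ofPred_subset_ofPred.2 fun _ ↦ le_of_lt)).trans h_tail

end StdGaussianPi

theorem gaussian_bilinear_tail_bound_general {m : ℕ} (u v : Fin m → ℝ)
    {δ : ℝ} (hδ : 0 < δ ∧ δ < 1) :
    stdGaussianPi (Fin m)
      {y : Fin m → ℝ |
        2 * Real.log (4 / δ) * Real.sqrt (∑ i, u i ^ 2) * Real.sqrt (∑ i, v i ^ 2)
          < |(u ⬝ᵥ y) * (v ⬝ᵥ y)|}
    ≤ ENNReal.ofReal δ := by
  obtain ⟨hδ0, hδ1⟩ := hδ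
  set L := log (4 / δ)
  have hL : 0 ≤ L := log_nonneg (by rw [le_div_iff₀ hδ0]; linarith)
  have h_threshold : 2 * L * √(∑ i, u i ^ 2) * √(∑ i, v i ^ 2)
      = (√(2 * L) * √(∑ i, u i ^ 2)) * (√(2 * L) * √(∑ i, v i ^ 2)) := by
    rw [mul_mul_mul_comm, mul_self_sqrt (by positivity), mul_assoc]
  have h_union :
      {y : Fin m → ℝ | 2 * L * √(∑ i, u i ^ 2) * √(∑ i, v i ^ 2) < |(u ⬝ᵥ y) * (v ⬝ᵥ y)|} ⊆
        {y | √(2 * L) * √(∑ i, u i ^ 2) < |u ⬝ᵥ y|}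
        ∪ {y | √(2 * L) * √(∑ i, v i ^ 2) < |v ⬝ᵥ y|} := fun y hy ↦ by
    rw [Set.mem_ofPred_eq, h_threshold] at hy
    exact lt_abs_or_lt_abs_of_mul_lt_abs_mul (by positivity) hy
  rw [ENNReal.le_ofReal_iff_toReal_le (measure_ne_top _ _) hδ0.le]
  calc _ ≤ _ := measureReal_mono h_union
    _ ≤ _ := measureReal_union_le _ _
    _ ≤ 2 * exp (-L) + 2 * exp (-L) := add_le_add (measureReal_lt_abs_dotProduct_le u hL)
        (measureReal_lt_abs_dotProduct_le v hL)
    _ = δ := by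
        rw [exp_neg, exp_log (by positivity)]
        field_simp
        ring

/-- Tail bound for the product of two Gaussian linear forms:
`γ_m { y : |⟨u,y⟩·⟨v,y⟩| > 2·ln(4/δ)·‖u‖·‖v‖ } ≤ δ`. -/
theorem gaussian_bilinear_tail_bound {m : ℕ} (hm : 0 < m) (u v : Fin m → ℝ)
    {δ : ℝ} (hδ : 0 < δ ∧ δ < 1) :
    stdGaussianPi (Fin m)
      {y : Fin m → ℝ |
        2 * Real.log (4 / δ) * Real.sqrt (∑ i, u i ^ 2) * Real.sqrt (∑ i, v i ^ 2)
          < |(u ⬝ᵥ y) * (v ⬝ᵥ y)|}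
    ≤ ENNReal.ofReal δ :=
  gaussian_bilinear_tail_bound_general u v hδ
end
end
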